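/- For every partial map M from keys to values whose domain is finite, nonempty, and prefix-free, there exists a flat Plebeia tree t satisfying the structural invariants (SI1) and (SI2) whose model equals M, i.e., ⟦t⟧(k) = M(k) for every key k. -/
import Mathlib


/-- A side is `L` or `R`. -/
inductive Side : Type
  | L | R
deriving DecidableEq, Repr

/-- A key is a list of sides. -/
abbrev Key := List Side

/-- The strict order `L < R` on sides. -/
def Side.lt : Side → Side → Prop := fun a b => a = Side.L ∧ b = Side.R

/-- The strict lexicographic order on keys induced by `L < R`. -/
def keyLt : Key → Key → Prop := List.Lex Side.lt

/-- A list of keys is prefix-free: for any two distinct keys in it,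
neither is a prefix of the other. -/
def PrefixFreeList (ks : List Key) : Prop :=
  List.Pairwise (fun a b => ¬ a <+: b ∧ ¬ b <+: a) ks

/-- A set of keys is prefix-free. -/
def PrefixFreeSet (S : Set Key) : Prop :=
  ∀ a ∈ S, ∀ b ∈ S, a ≠ b → ¬ a <+: b

/-- A list of keys is strictly increasing in the lexicographic order. -/
def SortedKeys (ks : List Key) : Prop := List.Pairwise keyLt ks

/-- Key list of an association list is prefix-free and strictly increasing. -/
def GoodKeyList (ks : List Key) : Prop := PrefixFreeList ks ∧ SortedKeys ks

/-- Prepend the key `s` to the key of every entry. -/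
def prependAll {β : Type _} (s : Key) (l : List (Key × β)) : List (Key × β) :=
  l.map (fun e => (s ++ e.1, e.2))

/-- `lookup l k` is `some` of the value of the first entry of `l` with key `k`. -/
def lookupA {β : Type _} (l : List (Key × β)) (k : Key) : Option β :=
  (l.find? (fun e => decide (e.1 = k))).map Prod.snd
/-- Flat Plebeia trees over a value type `α`. -/
inductive FNode (α : Type) : Type
  | leaf : α → FNode α
  | branch : FNode α → FNode α → FNode α
  | extender : Key → FNode α → FNode α

variable {α : Type}

def FNode.isExtender : FNode α → Prop
  | .extender _ _ => True
  | _ => False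

/-- The model `⟦t⟧ : key ⇀ α` of a flat Plebeia tree, as a function into `Option`. -/
def FNode.model : FNode α → Key → Option α
  | .leaf v, [] => some v
  | .leaf _, _ :: _ => none
  | .branch l _, Side.L :: k => l.model k
  | .branch _ r, Side.R :: k => r.model k
  | .branch _ _, [] => none
  | .extender s n, k => if s <+: k then n.model (k.drop s.length) else none

/-- `DOM t`: the set of keys on which `⟦t⟧` is defined. -/
def FNode.dom (t : FNode α) : Set Key := {k | (t.model k).isSome}

/-- Structural invariants (SI1), (SI2) at every subtree:
no extender has an extender as direct child, and no extender has an empty key. -/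
def FNode.inv : FNode α → Prop
  | .leaf _ => True
  | .branch l r => l.inv ∧ r.inv
  | .extender s n => (¬ n.isExtender) ∧ s ≠ [] ∧ n.inv

/-- Smart extender constructor: absorbs a child extender. -/
lemma ext_absorb {α : Type} (s : Key) (hs : s ≠ []) (t : FNode α) (ht : t.inv) :
    ∃ t' : FNode α, t'.inv ∧ ∀ k, t'.model k = (FNode.extender s t).model k := by
  cases t with
  | extender s' m =>
    obtain ⟨hm1, hs', hm⟩ := ht
    refine ⟨.extender (s ++ s') m, ⟨hm1, by simp [hs], hm⟩, ?_⟩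
    intro k
    simp only [FNode.model]
    by_cases h : s <+: k
    · obtain ⟨r, rfl⟩ := h
      rw [if_pos (List.prefix_append _ _)]
      rw [List.drop_left]
      by_cases h2 : s' <+: r
      · obtain ⟨r', rfl⟩ := h2
        rw [if_pos (List.prefix_append _ _), if_pos (by rw [← List.append_assoc]; exact List.prefix_append _ _)]
        rw [List.drop_left]
        rw [show s ++ (s' ++ r') = (s ++ s') ++ r' from (List.append_assoc _ _ _).symm, List.drop_left]
      · rw [if_neg h2, if_neg]
        intro hc
        exact h2 ((List.prefix_append_right_inj s).mp hc)
    · rw [if_neg h, if_neg]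
      intro hc
      exact h (((List.prefix_append _ _).trans hc))
  | leaf v => exact ⟨.extender s (.leaf v), ⟨by simp [FNode.isExtender], hs, trivial⟩, fun k => rfl⟩
  | branch l r => exact ⟨.extender s (.branch l r), ⟨by simp [FNode.isExtender], hs, ht⟩, fun k => rfl⟩

/-- Leaf case: if `[]` is in the domain, the domain is `{[]}`. -/
lemma leaf_case {α : Type} (M : Key → Option α) (h0 : (M []).isSome)
    (hpf : PrefixFreeSet {k : Key | (M k).isSome}) :
    ∃ t : FNode α, t.inv ∧ ∀ k : Key, t.model k = M k := by
  refine ⟨.leaf ((M []).get h0), trivial, ?_⟩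
  intro k
  cases k with
  | nil => simp [FNode.model]
  | cons a k' =>
    show none = M (a :: k')
    cases hM : M (a :: k') with
    | none => rfl
    | some v =>
      exfalso
      exact hpf [] h0 (a :: k') (by simp [hM]) (by simp) (List.nil_prefix)

lemma stmt5_aux {α : Type} : ∀ (n : ℕ) (M : Key → Option α),
    (∀ k, (M k).isSome → k.length ≤ n) →
    {k : Key | (M k).isSome}.Nonempty →
    PrefixFreeSet {k : Key | (M k).isSome} →
    ∃ t : FNode α, t.inv ∧ ∀ k : Key, t.model k = M k := by
  intro n
  induction n with
  | zero =>
    intro M hlen hne hpf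
    obtain ⟨k0, hk0⟩ := hne
    have hk0' : k0 = [] := List.length_eq_zero_iff.mp (Nat.le_zero.mp (hlen _ hk0))
    exact leaf_case M (hk0' ▸ hk0) hpf
  | succ n ih =>
    intro M hlen hne hpf
    by_cases h0 : (M []).isSome
    · exact leaf_case M h0 hpf
    · have hM0 : M [] = none := Option.not_isSome_iff_eq_none.mp h0
      set ML : Key → Option α := fun k => M (Side.L :: k) with hML
      set MR : Key → Option α := fun k => M (Side.R :: k) with hMR
      have hlenL : ∀ k, (ML k).isSome → k.length ≤ n := fun k h =>
        Nat.succ_le_succ_iff.mp (by simpa using hlen _ h)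
      have hlenR : ∀ k, (MR k).isSome → k.length ≤ n := fun k h =>
        Nat.succ_le_succ_iff.mp (by simpa using hlen _ h)
      have hpfL : PrefixFreeSet {k : Key | (ML k).isSome} := by
        intro a ha b hb hab hpre
        exact hpf (Side.L :: a) ha (Side.L :: b) hb (by simp [hab])
          (List.cons_prefix_cons.mpr ⟨rfl, hpre⟩)
      have hpfR : PrefixFreeSet {k : Key | (MR k).isSome} := by
        intro a ha b hb hab hpre
        exact hpf (Side.R :: a) ha (Side.R :: b) hb (by simp [hab])
          (List.cons_prefix_cons.mpr ⟨rfl, hpre⟩)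
      by_cases hLne : {k : Key | (ML k).isSome}.Nonempty
      · by_cases hRne : {k : Key | (MR k).isSome}.Nonempty
        · obtain ⟨tL, htLinv, htL⟩ := ih ML hlenL hLne hpfL
          obtain ⟨tR, htRinv, htR⟩ := ih MR hlenR hRne hpfR
          refine ⟨.branch tL tR, ⟨htLinv, htRinv⟩, ?_⟩
          intro k
          cases k with
          | nil => exact hM0.symm
          | cons a k' => cases a <;> [exact htL k'; exact htR k']
        · -- only L
          have hRnone : ∀ k, MR k = none := fun k =>
            Option.not_isSome_iff_eq_none.mp (fun h => hRne ⟨k, h⟩)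
          obtain ⟨tL, htLinv, htL⟩ := ih ML hlenL hLne hpfL
          obtain ⟨t', ht'inv, ht'⟩ := ext_absorb [Side.L] (by simp) tL htLinv
          refine ⟨t', ht'inv, ?_⟩
          intro k
          rw [ht']
          show (if [Side.L] <+: k then tL.model (k.drop 1) else none) = M k
          cases k with
          | nil => simp [hM0]
          | cons a k' =>
            cases a with
            | L =>
              rw [if_pos (List.cons_prefix_cons.mpr ⟨rfl, List.nil_prefix⟩)]
              exact htL k'
            | R =>
              rw [if_neg (by simp [List.cons_prefix_cons])]
              exact (hRnone k').symm
      · have hLnone : ∀ k, ML k = none := fun k =>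
          Option.not_isSome_iff_eq_none.mp (fun h => hLne ⟨k, h⟩)
        by_cases hRne : {k : Key | (MR k).isSome}.Nonempty
        · obtain ⟨tR, htRinv, htR⟩ := ih MR hlenR hRne hpfR
          obtain ⟨t', ht'inv, ht'⟩ := ext_absorb [Side.R] (by simp) tR htRinv
          refine ⟨t', ht'inv, ?_⟩
          intro k
          rw [ht']
          show (if [Side.R] <+: k then tR.model (k.drop 1) else none) = M k
          cases k with
          | nil => simp [hM0]
          | cons a k' =>
            cases a with
            | R =>
              rw [if_pos (List.cons_prefix_cons.mpr ⟨rfl, List.nil_prefix⟩)]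
              exact htR k'
            | L =>
              rw [if_neg (by simp [List.cons_prefix_cons])]
              exact (hLnone k').symm
        · exfalso
          obtain ⟨k0, hk0⟩ := hne
          cases k0 with
          | nil => exact h0 hk0
          | cons a k' =>
            cases a with
            | L => exact hLne ⟨k', hk0⟩
            | R => exact hRne ⟨k', hk0⟩

/-- every partial map from keys to values with a finite, nonempty,
prefix-free domain is the model of some flat Plebeia tree satisfying the
structural invariants (SI1), (SI2). -/
theorem stmt5 {α : Type} (M : Key → Option α)
    (hfin : {k : Key | (M k).isSome}.Finite)
    (hne : {k : Key | (M k).isSome}.Nonempty)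
    (hpf : PrefixFreeSet {k : Key | (M k).isSome}) :
    ∃ t : FNode α, t.inv ∧ ∀ k : Key, t.model k = M k := by
  obtain ⟨n, hn⟩ := (hfin.image List.length).bddAbove
  exact stmt5_aux n M (fun k hk => hn ⟨k, hk, rfl⟩) hne hpf
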